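/- arXiv:1711.10908 — 2 statements merged into one kernel-verified Lean document; each statement's English description precedes it below -/
import Mathlib

section
/- Fix m ≥ 3 and let I_m ⊆ ℝ[q₁,q₂] be the ideal generated by a_m and q₂·a_{m−1}. If f and g are weighted homogeneous polynomials (for the weights w(q₁)=1, w(q₂)=2) of weighted degrees i and j with i + j ≤ m − 1, and f·g ∈ I_m, then f ∈ I_m or g ∈ I_m. (Equivalently: every weighted homogeneous element of I_m of weighted degree at most m−1 is zero, so the good divisibility of the graded ring ℝ[q₁,q₂]/I_m is at least m−1.) -/
open MvPolynomial

/-- The recursively defined polynomials `a_m ∈ ℝ[q₁,q₂]`: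
`a₀ = 1`, `a₁ = q₁`, `a_m = q₁·a_{m−1} − q₂·a_{m−2}` for `m ≥ 2`.
Here `q₁ = X 0` and `q₂ = X 1`. -/
noncomputable def a : ℕ → MvPolynomial (Fin 2) ℝ
  | 0 => 1
  | 1 => X 0
  | (m + 2) => X 0 * a (m + 1) - X 1 * a m

lemma a_homog : ∀ m : ℕ, (a m).IsWeightedHomogeneous (![1, 2] : Fin 2 → ℕ) m
  | 0 => by simpa [a] using isWeightedHomogeneous_one ℝ (![1, 2] : Fin 2 → ℕ)
  | 1 => by simpa [a] using isWeightedHomogeneous_X ℝ (![1, 2] : Fin 2 → ℕ) 0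
  | (m + 2) => by
    have h1 : (X 0 * a (m + 1)).IsWeightedHomogeneous (![1, 2] : Fin 2 → ℕ) (m + 2) := by
      have h := (isWeightedHomogeneous_X ℝ (![1, 2] : Fin 2 → ℕ) 0).mul (a_homog (m + 1))
      have e : (![1, 2] : Fin 2 → ℕ) 0 + (m + 1) = m + 2 := by simp; omega
      exact e ▸ h
    have h2 : (X 1 * a m).IsWeightedHomogeneous (![1, 2] : Fin 2 → ℕ) (m + 2) := by
      have h := (isWeightedHomogeneous_X ℝ (![1, 2] : Fin 2 → ℕ) 1).mul (a_homog m)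
      have e : (![1, 2] : Fin 2 → ℕ) 1 + m = m + 2 := by simp; omega
      exact e ▸ h
    rw [a]
    rw [← mem_weightedHomogeneousSubmodule] at h1 h2 ⊢
    exact Submodule.sub_mem _ h1 h2

/-- If `h` is weighted homogeneous of degree `n` and `d < n`, then the degree-`d`
component of `u * h` vanishes. -/
lemma comp_mul_eq_zero {h : MvPolynomial (Fin 2) ℝ} {n : ℕ}
    (hh : h.IsWeightedHomogeneous (![1, 2] : Fin 2 → ℕ) n)
    (u : MvPolynomial (Fin 2) ℝ) {d : ℕ} (hd : d < n) :
    weightedHomogeneousComponent (![1, 2] : Fin 2 → ℕ) d (u * h) = 0 := by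
  classical
  ext e
  rw [coeff_weightedHomogeneousComponent, coeff_zero]
  split_ifs with he
  · rw [coeff_mul]
    apply Finset.sum_eq_zero
    intro x hx
    by_cases hz : coeff x.2 h = 0
    · simp [hz]
    · exfalso
      have hw2 : (Finsupp.weight (![1, 2] : Fin 2 → ℕ)) x.2 = n := hh hz
      have hmem : x.1 + x.2 = e := Finset.HasAntidiagonal.mem_antidiagonal.mp hx
      have : (Finsupp.weight (![1, 2] : Fin 2 → ℕ)) e =
          (Finsupp.weight (![1, 2] : Fin 2 → ℕ)) x.1 +
          (Finsupp.weight (![1, 2] : Fin 2 → ℕ)) x.2 := by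
        rw [← hmem, map_add]
      omega
  · rfl

lemma homog_mem_span_eq_zero {m d : ℕ} (hd : d < m)
    {p : MvPolynomial (Fin 2) ℝ}
    (hp : p.IsWeightedHomogeneous (![1, 2] : Fin 2 → ℕ) d)
    (hmem : p ∈ Ideal.span ({a m, X 1 * a (m - 1)} : Set (MvPolynomial (Fin 2) ℝ))) :
    p = 0 := by
  obtain ⟨u, v, huv⟩ := Ideal.mem_span_pair.mp hmem
  have hm1 : (X 1 * a (m - 1)).IsWeightedHomogeneous (![1, 2] : Fin 2 → ℕ)
      ((![1, 2] : Fin 2 → ℕ) 1 + (m - 1)) :=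
    (isWeightedHomogeneous_X ℝ (![1, 2] : Fin 2 → ℕ) 1).mul (a_homog (m - 1))
  have hw1 : (![1, 2] : Fin 2 → ℕ) 1 = 2 := by simp
  have h1 : weightedHomogeneousComponent (![1, 2] : Fin 2 → ℕ) d (u * a m) = 0 :=
    comp_mul_eq_zero (a_homog m) u hd
  have h2 : weightedHomogeneousComponent (![1, 2] : Fin 2 → ℕ) d (v * (X 1 * a (m - 1))) = 0 :=
    comp_mul_eq_zero hm1 v (by rw [hw1]; omega)
  calc p = weightedHomogeneousComponent (![1, 2] : Fin 2 → ℕ) d p :=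
        (hp.weightedHomogeneousComponent_same).symm
    _ = 0 := by rw [← huv, map_add, h1, h2, add_zero]

/-- Let `I_m` be the ideal of `ℝ[q₁,q₂]` generated by `a_m` and `q₂·a_{m−1}`
(for a fixed `m ≥ 3`).  If `f`, `g` are weighted homogeneous (for the weights
`w(q₁) = 1`, `w(q₂) = 2`) of weighted degrees `i`, `j` with `i + j ≤ m − 1` and
`f·g ∈ I_m`, then `f ∈ I_m` or `g ∈ I_m`. -/
theorem stmt_4 (m : ℕ) (hm : 3 ≤ m)
    (f g : MvPolynomial (Fin 2) ℝ) (i j : ℕ)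
    (hf : f.IsWeightedHomogeneous (![1, 2] : Fin 2 → ℕ) i)
    (hg : g.IsWeightedHomogeneous (![1, 2] : Fin 2 → ℕ) j)
    (hij : i + j ≤ m - 1)
    (hfg : f * g ∈ Ideal.span ({a m, X 1 * a (m - 1)} : Set (MvPolynomial (Fin 2) ℝ))) :
    f ∈ Ideal.span ({a m, X 1 * a (m - 1)} : Set (MvPolynomial (Fin 2) ℝ)) ∨
      g ∈ Ideal.span ({a m, X 1 * a (m - 1)} : Set (MvPolynomial (Fin 2) ℝ)) := by
  have hfg0 : f * g = 0 :=
    homog_mem_span_eq_zero (by omega) (hf.mul hg) hfg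
  rcases mul_eq_zero.mp hfg0 with h | h
  · exact Or.inl (h ▸ Ideal.zero_mem _)
  · exact Or.inr (h ▸ Ideal.zero_mem _)
end

section
/- Fix an integer n ≥ 2 and let J_n ⊆ ℝ[x,y] be the ideal generated by y² − (−1)ⁿ·x^{2n} and x·y. Then: (a) if f and g are weighted homogeneous polynomials (for the weights w(x)=1, w(y)=n) of weighted degrees i and j with i + j ≤ n, and f·g ∈ J_n, then f ∈ J_n or g ∈ J_n; (b) x ∉ J_n and y ∉ J_n, while x·y ∈ J_n. Hence the good divisibility of the graded ring ℝ[x,y]/J_n is exactly n (this is the statement g.d.(Q^{2n}) = n; in particular Lemma 5.4 of Pan's paper is incorrect). -/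
open MvPolynomial

lemma key (n d : ℕ) (hd : d < n) (f : MvPolynomial (Fin 2) ℝ)
    (hf : f.IsWeightedHomogeneous (![1, n] : Fin 2 → ℕ) d) :
    ∃ a : ℝ, f = C a * X 0 ^ d := by
  refine ⟨coeff (Finsupp.single 0 d) f, ?_⟩
  ext m
  rw [coeff_C_mul, coeff_X_pow]
  by_cases hm : Finsupp.single (0 : Fin 2) d = m
  · simp [hm]
  · simp only [hm, if_false, mul_zero]
    by_contra h
    apply hm
    have hw := hf h
    rw [Finsupp.weight_apply, Finsupp.sum_fintype] at hw
    · simp only [Fin.sum_univ_two, Matrix.cons_val_zero, Matrix.cons_val_one, Matrix.head_cons,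
        smul_eq_mul, mul_one] at hw
      have h1 : m 1 = 0 := by
        by_contra h1
        have : 1 * n ≤ m 1 * n := Nat.mul_le_mul_right n (Nat.one_le_iff_ne_zero.2 h1)
        simp at this; omega
      have h0 : m 0 = d := by simp [h1] at hw; omega
      ext i
      fin_cases i <;> simp [h0, h1]
    · intro i; simp


noncomputable abbrev Rq (n : ℕ) := Polynomial ℂ ⧸ Ideal.span {(Polynomial.X : Polynomial ℂ) ^ (n+1)}

noncomputable def phi (n : ℕ) : MvPolynomial (Fin 2) ℝ →ₐ[ℝ] Rq n :=
  aeval (![Ideal.Quotient.mk _ Polynomial.X,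
           Ideal.Quotient.mk _ (Polynomial.C (Complex.I ^ n) * Polynomial.X ^ n)] : Fin 2 → Rq n)

lemma mkz (n : ℕ) (p : Polynomial ℂ) (h : (Polynomial.X : Polynomial ℂ) ^ (n+1) ∣ p) :
    (Ideal.Quotient.mk (Ideal.span {(Polynomial.X : Polynomial ℂ) ^ (n+1)})) p = 0 := by
  rw [Ideal.Quotient.eq_zero_iff_mem, Ideal.mem_span_singleton]; exact h

lemma algebraMap_Rq (n : ℕ) (r : ℝ) : algebraMap ℝ (Rq n) r =
    Ideal.Quotient.mk _ (Polynomial.C (r : ℂ)) := by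
  rw [IsScalarTower.algebraMap_apply ℝ (Polynomial ℂ) (Rq n)]
  simp [Polynomial.algebraMap_eq, IsScalarTower.algebraMap_apply ℝ ℂ (Polynomial ℂ)]

lemma phi_ker (n : ℕ) (hn : 2 ≤ n) (p : MvPolynomial (Fin 2) ℝ)
    (hp : p ∈ Ideal.span ({X 1 ^ 2 - C ((-1 : ℝ) ^ n) * X 0 ^ (2 * n), X 0 * X 1} :
      Set (MvPolynomial (Fin 2) ℝ))) : phi n p = 0 := by
  have hle : Ideal.span ({X 1 ^ 2 - C ((-1 : ℝ) ^ n) * X 0 ^ (2 * n), X 0 * X 1} :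
      Set (MvPolynomial (Fin 2) ℝ)) ≤ RingHom.ker (phi n) := by
    rw [Ideal.span_le]
    rintro q hq
    simp only [Set.mem_insert_iff, Set.mem_singleton_iff] at hq
    rw [SetLike.mem_coe, RingHom.mem_ker]
    rcases hq with rfl | rfl <;>
      simp only [RingHom.coe_coe, map_sub, map_mul, map_pow, phi, aeval_X,
        algHom_C, algebraMap_Rq, Matrix.cons_val_zero, Matrix.cons_val_one, Matrix.head_cons]
    · simp only [← map_pow, ← map_mul, ← map_sub]
      apply mkz
      beta_reduce
      rw [mul_pow, ← pow_mul]
      exact dvd_sub (Dvd.dvd.mul_left (pow_dvd_pow _ (by omega)) _)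
        (Dvd.dvd.mul_left (pow_dvd_pow _ (by omega)) _)
    · simp only [← map_pow, ← map_mul]
      apply mkz
      beta_reduce
      exact ⟨Polynomial.C (Complex.I ^ n), by ring⟩
  exact hle hp

lemma Xpow_not_mem (n k : ℕ) (hn : 2 ≤ n) (hk : k ≤ n) :
    (X 0 : MvPolynomial (Fin 2) ℝ) ^ k ∉
      Ideal.span ({X 1 ^ 2 - C ((-1 : ℝ) ^ n) * X 0 ^ (2 * n), X 0 * X 1} :
        Set (MvPolynomial (Fin 2) ℝ)) := by
  intro h
  have h0 := phi_ker n hn _ h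
  rw [map_pow, phi, aeval_X] at h0
  simp only [Matrix.cons_val_zero] at h0
  rw [← map_pow, Ideal.Quotient.eq_zero_iff_mem, Ideal.mem_span_singleton] at h0
  have := Polynomial.natDegree_le_of_dvd h0 (pow_ne_zero _ Polynomial.X_ne_zero)
  simp [Polynomial.natDegree_X_pow] at this
  omega

lemma Y_not_mem (n : ℕ) (hn : 2 ≤ n) :
    (X 1 : MvPolynomial (Fin 2) ℝ) ∉
      Ideal.span ({X 1 ^ 2 - C ((-1 : ℝ) ^ n) * X 0 ^ (2 * n), X 0 * X 1} :
        Set (MvPolynomial (Fin 2) ℝ)) := by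
  intro h
  have h0 := phi_ker n hn _ h
  rw [phi, aeval_X] at h0
  simp only [Matrix.cons_val_one, Matrix.head_cons, Matrix.cons_val_zero] at h0
  rw [Ideal.Quotient.eq_zero_iff_mem, Ideal.mem_span_singleton] at h0
  have hc : (Complex.I ^ n) ≠ 0 := pow_ne_zero _ Complex.I_ne_zero
  have hne : (Polynomial.C (Complex.I ^ n) * Polynomial.X ^ n : Polynomial ℂ) ≠ 0 := by
    simp [hc]
  have := Polynomial.natDegree_le_of_dvd h0 hne
  rw [Polynomial.natDegree_X_pow, Polynomial.natDegree_C_mul_X_pow n _ hc] at this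
  omega


/-- Fix `n ≥ 2` and let `J_n ⊆ ℝ[x,y]` be the ideal generated by
`y² − (−1)ⁿ·x^{2n}` and `x·y` (here `x = X 0`, `y = X 1`).
(a) If `f`, `g` are weighted homogeneous (weights `w(x) = 1`, `w(y) = n`) of
weighted degrees `i`, `j` with `i + j ≤ n` and `f·g ∈ J_n`, then `f ∈ J_n` or
`g ∈ J_n`.
(b) `x ∉ J_n` and `y ∉ J_n`, while `x·y ∈ J_n`. -/
theorem stmt_7 (n : ℕ) (hn : 2 ≤ n) :
    (∀ (f g : MvPolynomial (Fin 2) ℝ) (i j : ℕ),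
        f.IsWeightedHomogeneous (![1, n] : Fin 2 → ℕ) i →
        g.IsWeightedHomogeneous (![1, n] : Fin 2 → ℕ) j →
        i + j ≤ n →
        f * g ∈ Ideal.span ({X 1 ^ 2 - C ((-1 : ℝ) ^ n) * X 0 ^ (2 * n), X 0 * X 1} :
          Set (MvPolynomial (Fin 2) ℝ)) →
        f ∈ Ideal.span ({X 1 ^ 2 - C ((-1 : ℝ) ^ n) * X 0 ^ (2 * n), X 0 * X 1} :
          Set (MvPolynomial (Fin 2) ℝ)) ∨
        g ∈ Ideal.span ({X 1 ^ 2 - C ((-1 : ℝ) ^ n) * X 0 ^ (2 * n), X 0 * X 1} :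
          Set (MvPolynomial (Fin 2) ℝ))) ∧
    (X 0 : MvPolynomial (Fin 2) ℝ) ∉
        Ideal.span ({X 1 ^ 2 - C ((-1 : ℝ) ^ n) * X 0 ^ (2 * n), X 0 * X 1} :
          Set (MvPolynomial (Fin 2) ℝ)) ∧
    (X 1 : MvPolynomial (Fin 2) ℝ) ∉
        Ideal.span ({X 1 ^ 2 - C ((-1 : ℝ) ^ n) * X 0 ^ (2 * n), X 0 * X 1} :
          Set (MvPolynomial (Fin 2) ℝ)) ∧
    (X 0 : MvPolynomial (Fin 2) ℝ) * X 1 ∈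
        Ideal.span ({X 1 ^ 2 - C ((-1 : ℝ) ^ n) * X 0 ^ (2 * n), X 0 * X 1} :
          Set (MvPolynomial (Fin 2) ℝ)) := by
  refine ⟨?_, ?_, Y_not_mem n hn, ?_⟩
  · intro f g i j hf hg hij hfg
    by_cases hi : i = 0
    · subst hi
      obtain ⟨a, rfl⟩ := key n 0 (by omega) f hf
      rw [pow_zero, mul_one]
      by_cases ha : a = 0
      · left; simp [ha]
      · right
        have h2 := Ideal.mul_mem_left _ (C a⁻¹) hfg
        rwa [pow_zero, mul_one, ← mul_assoc, ← C_mul, inv_mul_cancel₀ ha, C_1, one_mul] at h2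
    · by_cases hj : j = 0
      · subst hj
        obtain ⟨b, rfl⟩ := key n 0 (by omega) g hg
        rw [pow_zero, mul_one]
        by_cases hb : b = 0
        · right; simp [hb]
        · left
          have h2 := Ideal.mul_mem_left _ (C b⁻¹) hfg
          rwa [pow_zero, mul_one, mul_comm f, ← mul_assoc, ← C_mul, inv_mul_cancel₀ hb, C_1, one_mul] at h2
      · obtain ⟨a, rfl⟩ := key n i (by omega) f hf
        obtain ⟨b, rfl⟩ := key n j (by omega) g hg
        by_cases ha : a = 0
        · left; simp [ha]
        by_cases hb : b = 0
        · right; simp [hb]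
        exfalso
        have hab : a * b ≠ 0 := mul_ne_zero ha hb
        have h2 := Ideal.mul_mem_left _ (C (a * b)⁻¹) hfg
        rw [mul_mul_mul_comm, ← C_mul, ← pow_add, ← mul_assoc, ← C_mul,
          inv_mul_cancel₀ hab, C_1, one_mul] at h2
        exact Xpow_not_mem n (i + j) hn hij h2
  · have h1 := Xpow_not_mem n 1 hn (by omega)
    rwa [pow_one] at h1
  · exact Ideal.subset_span (Set.mem_insert_iff.2 (Or.inr rfl))
end
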